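/- For a random variable X on the unit sphere S^{q-1} with distribution F, a bounded spherical distance d with supremum d_sup, and a point x, if 0 < δ₁ < δ₂ < d_sup, then the local depth LD^{δ₁}(x;F) = d_sup − E[d(x,X) | d(x,X) ≤ δ₁] is at least LD^{δ₂}(x;F) = d_sup − E[d(x,X) | d(x,X) ≤ δ₂], i.e. local depth is monotonically non-increasing in the locality parameter δ. -/

import Mathlib

/-!
Enlarging the window from `{Z ≤ δ₁}` to `{Z ≤ δ₂}` adds only points where `Z > δ₁`, whereas the
mean of `Z` over `{Z ≤ δ₁}` is at most `δ₁`. The mean over the larger window is a convex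
combination of these two means, so the conditional mean of `Z` grows with `δ` and the local depth
`d_sup − E[Z | Z ≤ δ]` shrinks.
-/

open MeasureTheory

section

open Set

variable {α : Type*} [MeasurableSpace α] {μ : Measure α} {f : α → ℝ} {s t : Set α} {c : ℝ}

lemma setAverage_le_of_forall_le (hs₀ : μ s ≠ 0) (hs : μ s ≠ ⊤) (hf : IntegrableOn f s μ)
    (hfc : ∀ x ∈ s, f x ≤ c) : ⨍ x in s, f x ∂μ ≤ c :=
  let ⟨x, hx, hle⟩ := exists_setAverage_le hs₀ hs hf
  hle.trans (hfc x hx)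

lemma le_setAverage_of_forall_le (hs₀ : μ s ≠ 0) (hs : μ s ≠ ⊤) (hf : IntegrableOn f s μ)
    (hcf : ∀ x ∈ s, c ≤ f x) : c ≤ ⨍ x in s, f x ∂μ :=
  let ⟨x, hx, hle⟩ := exists_le_setAverage hs₀ hs hf
  (hcf x hx).trans hle

lemma setAverage_le_setAverage_of_subset (hst : s ⊆ t) (hs : MeasurableSet s)
    (ht : MeasurableSet t) (hs₀ : μ s ≠ 0) (ht_top : μ t ≠ ⊤) (hf : IntegrableOn f t μ)
    (hfs : ∀ x ∈ s, f x ≤ c) (hft : ∀ x ∈ t \ s, c ≤ f x) :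
    ⨍ x in s, f x ∂μ ≤ ⨍ x in t, f x ∂μ := by
  -- On a null `t \ s` the average is the junk value `0`, so that case is handled apart.
  by_cases hnull : μ (t \ s) = 0
  · rw [setAverage_congr (ae_eq_set.2 ⟨by simp [sdiff_eq_empty.2 hst], hnull⟩)]
  have hs_top : μ s ≠ ⊤ := measure_ne_top_of_subset hst ht_top
  have hdiff_top : μ (t \ s) ≠ ⊤ := measure_ne_top_of_subset sdiff_subset ht_top
  have hle : ⨍ x in s, f x ∂μ ≤ ⨍ x in t \ s, f x ∂μ :=
    (setAverage_le_of_forall_le hs₀ hs_top (hf.mono_set hst) hfs).trans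
      (le_setAverage_of_forall_le hnull hdiff_top (hf.mono_set sdiff_subset) hft)
  have hmem := average_union_mem_segment disjoint_sdiff_right.aedisjoint
    (ht.diff hs).nullMeasurableSet hs_top hdiff_top (hf.mono_set hst) (hf.mono_set sdiff_subset)
  rw [union_sdiff_cancel hst, segment_eq_Icc hle] at hmem
  exact hmem.1

lemma setAverage_sublevel_le_setAverage_sublevel {Z : α → ℝ} (hZ : Measurable Z) {a b : ℝ}
    (hab : a ≤ b) (ha₀ : μ {x | Z x ≤ a} ≠ 0) (hb_top : μ {x | Z x ≤ b} ≠ ⊤)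
    (hZb : IntegrableOn Z {x | Z x ≤ b} μ) :
    ⨍ x in {x | Z x ≤ a}, Z x ∂μ ≤ ⨍ x in {x | Z x ≤ b}, Z x ∂μ :=
  setAverage_le_setAverage_of_subset (fun _ hx => le_trans hx hab) (hZ measurableSet_Iic)
    (hZ measurableSet_Iic) ha₀ hb_top hZb (fun _ hx => hx) (fun _ hx => le_of_not_ge hx.2)

end

-- `Z ω` stands for `d(x, X ω)`.
theorem local_depth_antitone_in_delta_general
    {Ω : Type*} [MeasurableSpace Ω] (μ : Measure Ω) [IsProbabilityMeasure μ]
    (Z : Ω → ℝ) (hZmeas : Measurable Z) (hZ0 : ∀ ω, 0 ≤ Z ω)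
    (dsup : ℝ) (hZb : ∀ ω, Z ω ≤ dsup)
    (δ₁ δ₂ : ℝ) (h12 : δ₁ < δ₂)
    (hpos : 0 < μ {ω | Z ω ≤ δ₁}) :
    dsup - (∫ ω in {ω | Z ω ≤ δ₂}, Z ω ∂μ) / (μ {ω | Z ω ≤ δ₂}).toReal ≤
      dsup - (∫ ω in {ω | Z ω ≤ δ₁}, Z ω ∂μ) / (μ {ω | Z ω ≤ δ₁}).toReal := by
  have hZint : Integrable Z μ :=
    .of_bound hZmeas.aestronglyMeasurable dsup
      (.of_forall fun ω => (Real.norm_of_nonneg (hZ0 ω)).trans_le (hZb ω))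
  have hmean := setAverage_sublevel_le_setAverage_sublevel hZmeas h12.le hpos.ne'
    (measure_ne_top μ _) hZint.integrableOn
  simp only [setAverage_eq, measureReal_def, smul_eq_mul, ← div_eq_inv_mul] at hmean
  linarith

/-- Local depth `LD^δ(x;F) = d_sup − E[d(x,X) | d(x,X) ≤ δ]` (here `Z ω = d(x, X ω)`)
is monotonically non-increasing in the locality parameter `δ`. -/
theorem local_depth_antitone_in_delta
    {Ω : Type*} [MeasurableSpace Ω] (μ : Measure Ω) [IsProbabilityMeasure μ]
    (Z : Ω → ℝ) (hZmeas : Measurable Z) (hZ0 : ∀ ω, 0 ≤ Z ω)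
    (dsup : ℝ) (hZb : ∀ ω, Z ω ≤ dsup)
    (δ₁ δ₂ : ℝ) (h0 : 0 < δ₁) (h12 : δ₁ < δ₂) (h2 : δ₂ < dsup)
    (hpos : 0 < μ {ω | Z ω ≤ δ₁}) :
    dsup - (∫ ω in {ω | Z ω ≤ δ₂}, Z ω ∂μ) / (μ {ω | Z ω ≤ δ₂}).toReal ≤
      dsup - (∫ ω in {ω | Z ω ≤ δ₁}, Z ω ∂μ) / (μ {ω | Z ω ≤ δ₁}).toReal :=
  local_depth_antitone_in_delta_general μ Z hZmeas hZ0 dsup hZb δ₁ δ₂ h12 hpos
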